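/- Let α be a type and R ⊆ FreeGroup α a set of relators with 1 ∉ R. Then every nontrivial element of the normal closure of R is reachable, by a finite sequence of elementary moves all of whose resulting states are nontrivial, from some relator or inverse relator: for every w ∈ Subgroup.normalClosure R with w ≠ 1, there exists r : FreeGroup α with (r ∈ R or r⁻¹ ∈ R) such that Relation.ReflTransGen step01_R r w holds. -/

import Mathlib

/-- The elementary-move relation: `z` is obtained from `w` either by a
conjugation move by a generator (or its inverse), or by appending a relator
or an inverse relator on the right. -/
def StepR {α : Type*} (R : Set (FreeGroup α)) (w z : FreeGroup α) : Prop :=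
  (∃ a : α, z = FreeGroup.of a * w * (FreeGroup.of a)⁻¹ ∨
    z = (FreeGroup.of a)⁻¹ * w * FreeGroup.of a) ∨
  (∃ t : FreeGroup α, (t ∈ R ∨ t⁻¹ ∈ R) ∧ z = w * t)

/-- The identity-avoiding elementary-move relation. -/
def Step01R {α : Type*} (R : Set (FreeGroup α)) (w z : FreeGroup α) : Prop :=
  z ≠ 1 ∧ StepR R w z

/-!
Starting from `1`, append the conjugates `g r^{±1} g⁻¹` of relators whose product is `w`,
realising `u ↦ u * (g t g⁻¹)` as `u ↦ g⁻¹ u g ↦ g⁻¹ u g t ↦ u g t g⁻¹` with generator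
conjugations around one insertion. Along this path from `1` to `w ≠ 1`, look at the last
visit to `1`: conjugation fixes `1`, so the next move is an insertion, and the state
after it is a relator or an inverse relator from which the rest of the path avoids `1`.
-/

namespace StepR

variable {α : Type*} {R : Set (FreeGroup α)}

theorem reflTransGen_conj (g w : FreeGroup α) :
    Relation.ReflTransGen (StepR R) w (g * w * g⁻¹) := by
  induction g using FreeGroup.induction_on generalizing w with
  | C1 => simpa using Relation.ReflTransGen.refl
  | of a => exact .single (Or.inl ⟨a, Or.inl rfl⟩)
  | inv_of a _ => exact .single (Or.inl ⟨a, Or.inr (by rw [inv_inv])⟩)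
  | mul x y hx hy =>
      have hxy : x * (y * w * y⁻¹) * x⁻¹ = x * y * w * (x * y)⁻¹ := by group
      exact (hy w).trans (hxy ▸ hx _)

theorem reflTransGen_mul_conj {t : FreeGroup α} (ht : t ∈ R ∨ t⁻¹ ∈ R) (g u : FreeGroup α) :
    Relation.ReflTransGen (StepR R) u (u * (g * t * g⁻¹)) := by
  have hinsert : StepR R (g⁻¹ * u * g⁻¹⁻¹) (g⁻¹ * u * g⁻¹⁻¹ * t) := Or.inr ⟨t, ht, rfl⟩
  have hback : g * (g⁻¹ * u * g⁻¹⁻¹ * t) * g⁻¹ = u * (g * t * g⁻¹) := by group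
  exact ((reflTransGen_conj g⁻¹ u).tail hinsert).trans (hback ▸ reflTransGen_conj g _)

theorem reflTransGen_mul_of_mem_normalClosure {w : FreeGroup α}
    (hw : w ∈ Subgroup.normalClosure R) (u : FreeGroup α) :
    Relation.ReflTransGen (StepR R) u (u * w) := by
  induction hw using Subgroup.closure_induction'' generalizing u with
  | mem x hx =>
      obtain ⟨r, hr, hconj⟩ := Group.mem_conjugatesOfSet_iff.mp hx
      obtain ⟨g, rfl⟩ := isConj_iff.mp hconj
      exact reflTransGen_mul_conj (.inl hr) g u
  | inv_mem x hx =>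
      obtain ⟨r, hr, hconj⟩ := Group.mem_conjugatesOfSet_iff.mp hx
      obtain ⟨g, rfl⟩ := isConj_iff.mp hconj
      have hr' : r⁻¹ ∈ R ∨ r⁻¹⁻¹ ∈ R := .inr (by rwa [inv_inv])
      simpa only [conj_inv] using reflTransGen_mul_conj hr' g u
  | one => simpa using Relation.ReflTransGen.refl
  | mul x y _ _ hx hy => simpa only [mul_assoc] using (hx u).trans (hy (u * x))

theorem eq_one_or_of_one {z : FreeGroup α} (h : StepR R 1 z) : z = 1 ∨ z ∈ R ∨ z⁻¹ ∈ R := by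
  rcases h with ⟨a, rfl | rfl⟩ | ⟨t, ht, rfl⟩
  · exact .inl (by group)
  · exact .inl (by group)
  · exact .inr (by rwa [one_mul])

theorem exists_reflTransGen_step01R_of_one {w : FreeGroup α}
    (h : Relation.ReflTransGen (StepR R) 1 w) (hw : w ≠ 1) :
    ∃ r, (r ∈ R ∨ r⁻¹ ∈ R) ∧ Relation.ReflTransGen (Step01R R) r w := by
  induction h with
  | refl => exact absurd rfl hw
  | @tail z w _ hzw ih =>
      by_cases hz : z = 1
      · subst hz
        exact ⟨w, (eq_one_or_of_one hzw).resolve_left hw, .refl⟩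
      · obtain ⟨r, hr, hrz⟩ := ih hz
        exact ⟨r, hr, hrz.tail ⟨hw, hzw⟩⟩

end StepR

theorem reachable_from_relator_general {α : Type*} (R : Set (FreeGroup α)) :
    ∀ w ∈ Subgroup.normalClosure R, w ≠ 1 →
      ∃ r : FreeGroup α, (r ∈ R ∨ r⁻¹ ∈ R) ∧
        Relation.ReflTransGen (Step01R R) r w := by
  intro w hw hne
  have hpath : Relation.ReflTransGen (StepR R) 1 w := by
    simpa only [one_mul] using StepR.reflTransGen_mul_of_mem_normalClosure hw 1
  exact StepR.exists_reflTransGen_step01R_of_one hpath hne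

/-- Every nontrivial element of the normal closure of `R` (with `1 ∉ R`) is
reachable from some relator or inverse relator by a finite sequence of
elementary moves all of whose resulting states are nontrivial. -/
theorem reachable_from_relator {α : Type*} (R : Set (FreeGroup α))
    (h1R : (1 : FreeGroup α) ∉ R) :
    ∀ w ∈ Subgroup.normalClosure R, w ≠ 1 →
      ∃ r : FreeGroup α, (r ∈ R ∨ r⁻¹ ∈ R) ∧
        Relation.ReflTransGen (Step01R R) r w :=
  reachable_from_relator_general R
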